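/- Let A be a unital associative ring with orthogonal full idempotents e₁, e₂, e₃ summing to 1. Then every element a ∈ A can be written as a = Σᵢ aᵢ,₁ ⋯ aᵢ,ₙᵢ where each aᵢ,ⱼ ∈ [A,A], each nᵢ is even, and Σᵢ aᵢ,ₙᵢ ⋯ aᵢ,₁ = 0. -/

import Mathlib

/-!
Send a word `l` to `(l.prod, op l.reverse.prod) ∈ A × Aᵐᵒᵖ`. Concatenating words multiplies
these pairs, so the additive span `R` of the images of the nonempty even words in commutators is
a non-unital subsemiring, and the claim is that `(a, 0) ∈ R`.

Write `Aᵢⱼ = eᵢAeⱼ`. For `i ≠ j`, every element of `Aᵢⱼ` is the commutator `[eᵢ, x]`, and since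
`eₗ` is full, `Aᵢⱼ` is additively spanned by `AᵢₗAₗⱼ`. Choosing `l ∉ {i, j}`, the pair of
`x ∈ Aᵢₗ`, `y ∈ Aₗⱼ` is `(xy, op (yx))` with `yx = 0`, so `(Aᵢⱼ, 0)` and `(0, op Aᵢⱼ)` lie in `R`.
Multiplying the latter gives `(0, op Aⱼⱼ) ⊆ R`, which cancels the second coordinate of
`(xy, op (yx))` for `x ∈ Aᵢₗ`, `y ∈ Aₗᵢ`; hence `(Aᵢᵢ, 0) ⊆ R` too, and `a = ∑ eᵢaeⱼ`.
-/

open MulOpposite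

section

variable {A : Type*} [Ring A]

variable (A) in
def commutatorSpan : AddSubgroup A :=
  AddSubgroup.closure {z : A | ∃ u v : A, z = u * v - v * u}

variable (A) in
def evenCommutatorWords : Set (List A) :=
  {l | (∀ x ∈ l, x ∈ commutatorSpan A) ∧ l.length ≠ 0 ∧ Even l.length}

def wordPair (l : List A) : A × Aᵐᵒᵖ := (l.prod, op l.reverse.prod)

lemma wordPair_append (l l' : List A) : wordPair (l ++ l') = wordPair l * wordPair l' := by
  simp [wordPair]

variable (A) in
def evenCommutatorWordPairs : Subsemigroup (A × Aᵐᵒᵖ) where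
  carrier := wordPair '' evenCommutatorWords A
  mul_mem' := by
    rintro _ _ ⟨l, ⟨hl, hl0, hle⟩, rfl⟩ ⟨l', ⟨hl', -, hle'⟩, rfl⟩
    refine ⟨l ++ l', ⟨?_, by simp [hl0], by simpa using hle.add hle'⟩, wordPair_append l l'⟩
    simpa [or_imp, forall_and] using And.intro hl hl'

variable (A) in
def evenCommutatorWordSpan : NonUnitalSubsemiring (A × Aᵐᵒᵖ) :=
  NonUnitalSubsemiring.closure (evenCommutatorWordPairs A)

lemma exists_sum_wordPair_of_mem {b : A × Aᵐᵒᵖ} (hb : b ∈ evenCommutatorWordSpan A) :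
    ∃ (m : ℕ) (ls : Fin m → List A),
      (∀ i, ls i ∈ evenCommutatorWords A) ∧ b = ∑ i, wordPair (ls i) := by
  rw [evenCommutatorWordSpan, NonUnitalSubsemiring.mem_closure_iff,
    Subsemigroup.closure_eq] at hb
  obtain ⟨L, hL, rfl⟩ := AddSubmonoid.exists_list_of_mem_closure hb
  choose ls hls hls_eq using fun i : Fin L.length => hL L[i.1] (L.getElem_mem i.2)
  exact ⟨L.length, ls, hls, by rw [Finset.sum_congr rfl fun i _ => hls_eq i, Fin.sum_univ_getElem]⟩

lemma mul_pair_mem_evenCommutatorWordSpan {x y : A} (hx : x ∈ commutatorSpan A)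
    (hy : y ∈ commutatorSpan A) : (x * y, op (y * x)) ∈ evenCommutatorWordSpan A := by
  refine NonUnitalSubsemiring.subset_closure ⟨[x, y], ⟨?_, by simp, by simp⟩, by simp [wordPair]⟩
  simp [hx, hy]

def IsFullElem (f : A) : Prop :=
  AddSubgroup.closure {x : A | ∃ a b : A, x = a * f * b} = ⊤

lemma IsFullElem.mul_mul_mem {f : A} (hfull : IsFullElem f) (hf : IsIdempotentElem f)
    {M : AddSubmonoid A} {p q : A} (hM : ∀ c d, p * c * f * (f * d * q) ∈ M) (w : A) :
    p * w * q ∈ M := by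
  set S : Set A := {x | ∃ a b : A, x = a * f * b}
  have hff : ∀ x, f * (f * x) = f * x := fun x => by rw [← mul_assoc, hf.eq]
  suffices ∀ u ∈ AddSubmonoid.closure (S ∪ -S), p * w * u * q ∈ M by
    have h1 : (1 : A) ∈ AddSubmonoid.closure (S ∪ -S) := by
      rw [← AddSubgroup.closure_toAddSubmonoid, hfull]
      trivial
    simpa only [mul_one] using this 1 h1
  intro u hu
  induction hu using AddSubmonoid.closure_induction with
  | mem z hz =>
    obtain ⟨a, b, rfl⟩ : ∃ a b : A, z = a * f * b := by
      rcases hz with h | ⟨a, b, h⟩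
      · exact h
      · exact ⟨-a, b, by rw [neg_mul, neg_mul, ← h, neg_neg]⟩
    simpa only [mul_assoc, hff] using hM (w * a) b
  | zero => simp
  | add x y _ _ hx hy => simpa only [mul_add, add_mul] using add_mem hx hy

namespace OrthogonalIdempotents

variable {ι : Type*} {e : ι → A}

lemma mul_mul_mem_commutatorSpan (he : OrthogonalIdempotents e) {i j : ι} (hij : i ≠ j)
    (x : A) : e i * x * e j ∈ commutatorSpan A := by
  refine AddSubgroup.subset_closure ⟨e i, e i * x * e j, ?_⟩
  rw [← mul_assoc, ← mul_assoc, (he.idem i).eq, mul_assoc _ (e j), he.ortho hij.symm, mul_zero,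
    sub_zero]

lemma mul_mul_eq_zero (he : OrthogonalIdempotents e) {i j : ι} (hij : i ≠ j) (x : A) :
    e i * (e j * x) = 0 := by
  rw [← mul_assoc, he.ortho hij, zero_mul]

lemma offDiag_zero_mem (he : OrthogonalIdempotents e) {i j l : ι} (hil : i ≠ l) (hlj : l ≠ j)
    (hij : i ≠ j) (hfull : IsFullElem (e l)) (w : A) :
    (e i * w * e j, 0) ∈ evenCommutatorWordSpan A := by
  refine hfull.mul_mul_mem (M := (evenCommutatorWordSpan A).toAddSubmonoid.comap
    (AddMonoidHom.inl A Aᵐᵒᵖ)) (he.idem l) (fun c d => ?_) w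
  show (_, 0) ∈ evenCommutatorWordSpan A
  have h := mul_pair_mem_evenCommutatorWordSpan (he.mul_mul_mem_commutatorSpan hil c)
    (he.mul_mul_mem_commutatorSpan hlj d)
  simpa only [mul_assoc, he.mul_mul_eq_zero hij.symm, mul_zero, op_zero] using h

lemma zero_offDiag_mem (he : OrthogonalIdempotents e) {i j l : ι} (hil : i ≠ l) (hlj : l ≠ j)
    (hij : i ≠ j) (hfull : IsFullElem (e l)) (w : A) :
    (0, op (e i * w * e j)) ∈ evenCommutatorWordSpan A := by
  refine hfull.mul_mul_mem (M := (evenCommutatorWordSpan A).toAddSubmonoid.comap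
    ((AddMonoidHom.inr A Aᵐᵒᵖ).comp opAddEquiv.toAddMonoidHom)) (he.idem l)
    (fun c d => ?_) w
  show (0, op _) ∈ evenCommutatorWordSpan A
  have h := mul_pair_mem_evenCommutatorWordSpan (he.mul_mul_mem_commutatorSpan hlj d)
    (he.mul_mul_mem_commutatorSpan hil c)
  simpa only [mul_assoc, he.mul_mul_eq_zero hij.symm, mul_zero] using h

lemma zero_diag_mem (he : OrthogonalIdempotents e) (hfull : ∀ i, IsFullElem (e i))
    (h3 : ∀ i j : ι, ∃ l, l ≠ i ∧ l ≠ j) (j : ι) (t : A) :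
    (0, op (e j * t * e j)) ∈ evenCommutatorWordSpan A := by
  obtain ⟨k, hkj, -⟩ := h3 j j
  obtain ⟨l, hlj, hlk⟩ := h3 j k
  refine (hfull k).mul_mul_mem (M := (evenCommutatorWordSpan A).toAddSubmonoid.comap
    ((AddMonoidHom.inr A Aᵐᵒᵖ).comp opAddEquiv.toAddMonoidHom)) (he.idem k)
    (fun c d => ?_) t
  show (0, op _) ∈ evenCommutatorWordSpan A
  have h := mul_mem (he.zero_offDiag_mem hlk.symm hlj hkj (hfull l) d)
    (he.zero_offDiag_mem hlj.symm hlk hkj.symm (hfull l) c)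
  simpa using h

lemma diag_zero_mem (he : OrthogonalIdempotents e) (hfull : ∀ i, IsFullElem (e i))
    (h3 : ∀ i j : ι, ∃ l, l ≠ i ∧ l ≠ j) (i : ι) (w : A) :
    (e i * w * e i, 0) ∈ evenCommutatorWordSpan A := by
  obtain ⟨l, hli, -⟩ := h3 i i
  refine (hfull l).mul_mul_mem (M := (evenCommutatorWordSpan A).toAddSubmonoid.comap
    (AddMonoidHom.inl A Aᵐᵒᵖ)) (he.idem l) (fun c d => ?_) w
  show (_, 0) ∈ evenCommutatorWordSpan A
  have h := add_mem (mul_pair_mem_evenCommutatorWordSpan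
    (he.mul_mul_mem_commutatorSpan hli.symm c) (he.mul_mul_mem_commutatorSpan hli d))
    (he.zero_diag_mem hfull h3 l (-(d * e i * (e i * c))))
  convert h using 1
  simp [mul_assoc]

lemma corner_zero_mem (he : OrthogonalIdempotents e) (hfull : ∀ i, IsFullElem (e i))
    (h3 : ∀ i j : ι, ∃ l, l ≠ i ∧ l ≠ j) (i j : ι) (w : A) :
    (e i * w * e j, 0) ∈ evenCommutatorWordSpan A := by
  rcases eq_or_ne i j with rfl | hij
  · exact he.diag_zero_mem hfull h3 i w
  · obtain ⟨l, hli, hlj⟩ := h3 i j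
    exact he.offDiag_zero_mem hli.symm hlj hij (hfull l) w

end OrthogonalIdempotents

lemma CompleteOrthogonalIdempotents.mk_zero_mem {ι : Type*} [Fintype ι] {e : ι → A}
    (he : CompleteOrthogonalIdempotents e) (hfull : ∀ i, IsFullElem (e i))
    (h3 : ∀ i j : ι, ∃ l, l ≠ i ∧ l ≠ j) (a : A) :
    (a, 0) ∈ evenCommutatorWordSpan A := by
  have hdecomp : (a, (0 : Aᵐᵒᵖ)) = ∑ i, ∑ j, (e i * a * e j, 0) := by
    refine Prod.ext ?_ (by simp [Prod.snd_sum])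
    simp_rw [Prod.fst_sum, ← Finset.mul_sum, ← Finset.sum_mul, he.complete, one_mul, mul_one]
  rw [hdecomp]
  exact sum_mem fun i _ => sum_mem fun j _ => he.corner_zero_mem hfull h3 i j a

end

/-- Every element of `A` is a sum of even-length products of elements of `[A,A]`
whose sum of reversed products is zero. -/
theorem stmt_15 (A : Type*) [Ring A] (e : Fin 3 → A)
    (hidem : ∀ i, e i * e i = e i)
    (horth : ∀ i j, i ≠ j → e i * e j = 0)
    (hsum : ∑ i, e i = 1)
    (hfull : ∀ i, AddSubgroup.closure {x : A | ∃ a b : A, x = a * e i * b} = ⊤)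
    (a : A) :
    ∃ (m : ℕ) (ls : Fin m → List A),
      (∀ i, ∀ x ∈ ls i,
        x ∈ AddSubgroup.closure {z : A | ∃ u v : A, z = u * v - v * u}) ∧
      (∀ i, (ls i).length ≠ 0 ∧ Even (ls i).length) ∧
      a = ∑ i, (ls i).prod ∧
      (∑ i, (ls i).reverse.prod) = 0 := by
  have he : CompleteOrthogonalIdempotents e := ⟨⟨hidem, horth⟩, hsum⟩
  obtain ⟨m, ls, hls, hpairs⟩ :=
    exists_sum_wordPair_of_mem (he.mk_zero_mem hfull (by decide) a)
  refine ⟨m, ls, fun i => (hls i).1, fun i => (hls i).2, ?_, ?_⟩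
  · simpa [wordPair, Prod.fst_sum] using congrArg Prod.fst hpairs
  · simpa [wordPair, Prod.snd_sum, eq_comm] using congrArg (fun b => unop b.2) hpairs
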